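/- arXiv:2012.03187 — 3 statements merged into one kernel-verified Lean document; each statement's English description precedes it below -/
import Mathlib

section
/- For every integer k ≥ 3 there exist a constant C' = C'(k) and an infinite strictly increasing sequence (n_i)_{i≥1} of positive integers such that for every n in the sequence and every set A ⊆ [n]^k of size at least C'·c_k(n), the number of k-dimensional corners in A satisfies Γ_k(A) ≥ (log n)^{3k+1} · (n^k/c_k(n))^k · n^{k−1}. -/
/-- The grid `{1,…,n}^k` as a finset of functions `Fin k → ℕ`. -/
def gridNk (k n : ℕ) : Finset (Fin k → ℕ) :=
  Fintype.piFinset fun _ => Finset.Icc 1 n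

/-- `C` is a `k`-dimensional corner in `[n]^k`: a set of points
`{a} ∪ {a + d·eᵢ : 1 ≤ i ≤ k}` for some `a` and integer `d > 0`, all lying in the grid. -/
def IsGridCorner (k n : ℕ) (C : Finset (Fin k → ℕ)) : Prop :=
  ∃ a : Fin k → ℕ, ∃ d : ℕ, 0 < d ∧
    C = insert a (Finset.image (fun i => Function.update a i (a i + d)) Finset.univ) ∧
    C ⊆ gridNk k n

/-- `A` is `k`-dimensional corner-free: it contains no `k`-dimensional corner. -/
def GridCornerFree (k n : ℕ) (A : Finset (Fin k → ℕ)) : Prop :=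
  ∀ C : Finset (Fin k → ℕ), IsGridCorner k n C → ¬ C ⊆ A

/-- `c_k(n)`: the maximum size of a `k`-dimensional corner-free subset of `[n]^k`. -/
noncomputable def cornerFreeNumber (k n : ℕ) : ℕ :=
  sSup {m : ℕ | ∃ A : Finset (Fin k → ℕ), A ⊆ gridNk k n ∧ GridCornerFree k n A ∧ A.card = m}

/-- `Γ_k(A)`: the number of `k`-dimensional corners contained in `A`. -/
noncomputable def cornerCount (k n : ℕ) (A : Finset (Fin k → ℕ)) : ℕ :=
  Set.ncard {C : Finset (Fin k → ℕ) | IsGridCorner k n C ∧ C ⊆ A}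

open Finset

lemma cornerFree_card_le {k n : ℕ} {A : Finset (Fin k → ℕ)} (hA : A ⊆ gridNk k n)
    (hf : GridCornerFree k n A) : A.card ≤ cornerFreeNumber k n := by
  apply le_csSup
  · refine ⟨(gridNk k n).card, ?_⟩
    rintro m ⟨A', hA', -, rfl⟩
    exact Finset.card_le_card hA'
  · exact ⟨A, hA, hf, rfl⟩

lemma cornerSet_finite (k n : ℕ) (A : Finset (Fin k → ℕ)) :
    {C : Finset (Fin k → ℕ) | IsGridCorner k n C ∧ C ⊆ A}.Finite :=
  Set.Finite.subset A.powerset.finite_toSet (fun C hC => by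
    simpa [Finset.mem_powerset] using hC.2)

lemma card_le_count_add (k n : ℕ) : ∀ A : Finset (Fin k → ℕ), A ⊆ gridNk k n →
    A.card ≤ cornerCount k n A + cornerFreeNumber k n := by
  intro A
  induction A using Finset.strongInduction with
  | _ A ih =>
    intro hA
    by_cases hfree : GridCornerFree k n A
    · have := cornerFree_card_le hA hfree; omega
    · simp only [GridCornerFree, not_forall, not_not] at hfree
      obtain ⟨C, hC, hCA⟩ := hfree
      obtain ⟨a, d, hd, hCeq, hCg⟩ := hC
      have haC : a ∈ C := by rw [hCeq]; exact mem_insert_self _ _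
      have haA : a ∈ A := hCA haC
      have hss : A.erase a ⊂ A := Finset.erase_ssubset haA
      have h2 := ih _ hss ((Finset.erase_subset _ _).trans hA)
      have hcount : cornerCount k n (A.erase a) + 1 ≤ cornerCount k n A := by
        have hfinA := cornerSet_finite k n A
        have hfinA' := cornerSet_finite k n (A.erase a)
        have hCmem : C ∉ {C' : Finset (Fin k → ℕ) | IsGridCorner k n C' ∧ C' ⊆ A.erase a} := by
          intro h
          exact (Finset.notMem_erase a A) (h.2 haC)
        have hsub : insert C {C' : Finset (Fin k → ℕ) | IsGridCorner k n C' ∧ C' ⊆ A.erase a}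
            ⊆ {C' : Finset (Fin k → ℕ) | IsGridCorner k n C' ∧ C' ⊆ A} := by
          rintro X hX
          rcases Set.mem_insert_iff.1 hX with rfl | hX
          · exact ⟨⟨a, d, hd, hCeq, hCg⟩, hCA⟩
          · exact ⟨hX.1, hX.2.trans (Finset.erase_subset _ _)⟩
        have h3 : (insert C {C' : Finset (Fin k → ℕ) | IsGridCorner k n C' ∧ C' ⊆ A.erase a}).ncard
            ≤ cornerCount k n A := Set.ncard_le_ncard hsub hfinA
        rwa [Set.ncard_insert_of_notMem hCmem hfinA'] at h3
      have h4 : (A.erase a).card = A.card - 1 := Finset.card_erase_of_mem haA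
      have h5 : 0 < A.card := Finset.card_pos.2 ⟨a, haA⟩
      omega

lemma cFN_lower (k n : ℕ) (hk : 3 ≤ k) (hn : 64 ≤ n) :
    rothNumberNat (n/4) * (n/8) * n^(k-2) ≤ cornerFreeNumber k n := by
  classical
  set q := n / 4 with hq
  set s := n / 8 with hs
  set c0 := n + 2 * q with hc0
  obtain ⟨B, hBsub, hBcard, hBfree⟩ := rothNumberNat_spec q
  have hBlt : ∀ b ∈ B, b < q := fun b hb => Finset.mem_range.1 (hBsub hb)
  set i0 : Fin k := ⟨0, by omega⟩ with hi0
  set i1 : Fin k := ⟨1, by omega⟩ with hi1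
  have hne : i0 ≠ i1 := by simp [hi0, hi1, Fin.ext_iff]
  set A₀ : Finset (Fin k → ℕ) :=
    (gridNk k n).filter (fun a => ∃ b ∈ B, a i0 + 2 * a i1 = b + c0) with hA₀
  have hA₀sub : A₀ ⊆ gridNk k n := Finset.filter_subset _ _
  -- corner-freeness
  have hfree : GridCornerFree k n A₀ := by
    rintro C ⟨a, d, hd, hCeq, hCg⟩ hsub
    have ha : a ∈ A₀ := hsub (by rw [hCeq]; exact mem_insert_self _ _)
    have h0 : Function.update a i0 (a i0 + d) ∈ A₀ :=
      hsub (by rw [hCeq]; exact mem_insert_of_mem (mem_image_of_mem _ (mem_univ i0)))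
    have h1 : Function.update a i1 (a i1 + d) ∈ A₀ :=
      hsub (by rw [hCeq]; exact mem_insert_of_mem (mem_image_of_mem _ (mem_univ i1)))
    obtain ⟨-, b0, hb0B, hb0⟩ := Finset.mem_filter.1 ha
    obtain ⟨-, b1, hb1B, hb1⟩ := Finset.mem_filter.1 h0
    obtain ⟨-, b2, hb2B, hb2⟩ := Finset.mem_filter.1 h1
    rw [Function.update_self, Function.update_of_ne hne.symm] at hb1
    rw [Function.update_self, Function.update_of_ne hne] at hb2
    have heq : b0 + b2 = b1 + b1 := by omega
    have : b0 = b1 := hBfree hb0B hb1B hb2B heq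
    omega
  -- the injection
  set T : Finset (Fin k → ℕ) :=
    Fintype.piFinset (fun i : Fin k =>
      if i = i0 ∨ i = i1 then ({1} : Finset ℕ) else Finset.Icc 1 n) with hT
  set D : Finset (ℕ × ℕ × (Fin k → ℕ)) := B ×ˢ (Finset.Ico (2*q) (2*q + s)) ×ˢ T with hD
  set F : ℕ × ℕ × (Fin k → ℕ) → (Fin k → ℕ) := fun p =>
    Function.update (Function.update p.2.2 i0 (p.1 + c0 - 2 * p.2.1)) i1 p.2.1 with hF
  have hmem : ∀ p ∈ D, F p ∈ A₀ := by
    rintro ⟨b, y, t⟩ hp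
    simp only [hD, Finset.mem_product] at hp
    obtain ⟨hb, hy, ht⟩ := hp
    have hbq : b < q := hBlt b hb
    have hy' : 2*q ≤ y ∧ y < 2*q + s := by
      constructor
      · exact (Finset.mem_Ico.1 hy).1
      · exact (Finset.mem_Ico.1 hy).2
    have htmem := Fintype.mem_piFinset.1 ht
    refine Finset.mem_filter.2 ⟨?_, b, hb, ?_⟩
    · refine Fintype.mem_piFinset.2 (fun i => ?_)
      by_cases hI1 : i = i1
      · subst hI1
        rw [hF]; simp only [Function.update_self]
        rw [Finset.mem_Icc]; omega
      · by_cases hI0 : i = i0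
        · subst hI0
          rw [hF]; simp only [Function.update_of_ne hne, Function.update_self]
          rw [Finset.mem_Icc]; omega
        · have := htmem i
          rw [if_neg (by tauto)] at this
          rw [hF]; simp only [Function.update_of_ne hI1, Function.update_of_ne hI0]
          exact this
    · rw [hF]
      simp only [Function.update_self, Function.update_of_ne hne, Function.update_self]
      omega
  have hinj : Set.InjOn F D := by
    rintro ⟨b, y, t⟩ hp ⟨b', y', t'⟩ hp' hFeq
    simp only [hD, Finset.mem_coe, Finset.mem_product] at hp hp'
    obtain ⟨hb, hy, ht⟩ := hp
    obtain ⟨hb', hy', ht'⟩ := hp'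
    have hbq : b < q := hBlt b hb
    have hbq' : b' < q := hBlt b' hb'
    have hyI := Finset.mem_Ico.1 hy
    have hyI' := Finset.mem_Ico.1 hy'
    have htmem := Fintype.mem_piFinset.1 ht
    have htmem' := Fintype.mem_piFinset.1 ht'
    have e1 : y = y' := by
      have := congrFun hFeq i1
      simpa [hF, Function.update_self] using this
    have e0 : b = b' := by
      have := congrFun hFeq i0
      simp only [hF, Function.update_of_ne hne, Function.update_self] at this
      omega
    have e2 : t = t' := by
      funext i
      by_cases hI1 : i = i1
      · subst hI1
        have h := htmem i1; have h' := htmem' i1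
        rw [if_pos (by tauto)] at h h'
        simp only [Finset.mem_singleton] at h h'
        omega
      · by_cases hI0 : i = i0
        · subst hI0
          have h := htmem i0; have h' := htmem' i0
          rw [if_pos (by tauto)] at h h'
          simp only [Finset.mem_singleton] at h h'
          omega
        · have := congrFun hFeq i
          simpa [hF, Function.update_of_ne hI1, Function.update_of_ne hI0] using this
    simp [e0, e1, e2]
  have hcard : D.card ≤ A₀.card := Finset.card_le_card_of_injOn F hmem hinj
  have hDcard : D.card = B.card * (s * n^(k-2)) := by
    rw [hD, Finset.card_product, Finset.card_product]
    congr 1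
    congr 1
    · rw [Nat.card_Ico]; omega
    · rw [hT, Fintype.card_piFinset]
      have : ∀ i : Fin k, ((if i = i0 ∨ i = i1 then ({1} : Finset ℕ) else Finset.Icc 1 n)).card
          = if i = i0 ∨ i = i1 then 1 else n := by
        intro i; split <;> simp [Nat.card_Icc]
      rw [Finset.prod_congr rfl (fun i _ => this i), Finset.prod_ite]
      simp only [Finset.prod_const_one, Finset.prod_const, one_mul]
      congr 1
      have hfe : Finset.univ.filter (fun i : Fin k => ¬(i = i0 ∨ i = i1))
          = Finset.univ \ {i0, i1} := by
        ext i; simp [not_or]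
      rw [hfe, Finset.card_sdiff_of_subset (by simp)]
      have : ({i0, i1} : Finset (Fin k)).card = 2 := by
        rw [Finset.card_insert_of_notMem (by simpa using hne), Finset.card_singleton]
      simp [this]
  calc rothNumberNat q * s * n^(k-2) = B.card * (s * n^(k-2)) := by rw [hBcard]; ring
    _ = D.card := hDcard.symm
    _ ≤ A₀.card := hcard
    _ ≤ cornerFreeNumber k n := cornerFree_card_le hA₀sub hfree

open Real in
lemma cFN_lower_real (k n : ℕ) (hk : 3 ≤ k) (hn : 64 ≤ n) :
    (n:ℝ)^k * Real.exp (-4 * Real.sqrt (Real.log n)) / 128 ≤ (cornerFreeNumber k n : ℝ) := by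
  have h1 := cFN_lower k n hk hn
  set q := n / 4 with hq
  set s := n / 8 with hs
  have hroth := Behrend.roth_lower_bound (N := q)
  have hq8 : (n:ℝ)/8 ≤ (q:ℝ) := by
    have : n ≤ 8 * q := by omega
    have := (Nat.cast_le (α := ℝ)).2 this
    push_cast at this; linarith
  have hs16 : (n:ℝ)/16 ≤ (s:ℝ) := by
    have : n ≤ 16 * s := by omega
    have := (Nat.cast_le (α := ℝ)).2 this
    push_cast at this; linarith
  have hEmono : Real.exp (-4 * Real.sqrt (Real.log n)) ≤ Real.exp (-4 * Real.sqrt (Real.log q)) := by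
    apply Real.exp_le_exp.2
    have h2 : Real.log q ≤ Real.log n := by
      have hqpos : 0 < q := by omega
      apply Real.log_le_log (by exact_mod_cast hqpos) ((Nat.cast_le (α := ℝ)).2 (by omega))
    have := Real.sqrt_le_sqrt h2
    nlinarith [Real.sqrt_nonneg (Real.log q)]
  have hnpos : (0:ℝ) < n := by positivity
  have hE : (0:ℝ) < Real.exp (-4 * Real.sqrt (Real.log n)) := Real.exp_pos _
  have hsplit : (n:ℝ)^k = (n:ℝ)^2 * (n:ℝ)^(k-2) := by
    rw [← pow_add]; congr 1; omega
  have key : ((n:ℝ)/8 * Real.exp (-4 * Real.sqrt (Real.log n))) * ((n:ℝ)/16 * (n:ℝ)^(k-2))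
      ≤ ((q:ℝ) * Real.exp (-4 * Real.sqrt (Real.log q))) * ((s:ℝ) * (n:ℝ)^(k-2)) := by
    apply mul_le_mul
    · exact mul_le_mul hq8 hEmono (le_of_lt hE) (by positivity)
    · exact mul_le_mul_of_nonneg_right hs16 (by positivity)
    · positivity
    · positivity
  have hcast : ((rothNumberNat q : ℝ)) * ((s:ℝ) * (n:ℝ)^(k-2)) ≤ (cornerFreeNumber k n : ℝ) := by
    have := (Nat.cast_le (α := ℝ)).2 h1
    push_cast at this
    linarith [this]
  calc (n:ℝ)^k * Real.exp (-4 * Real.sqrt (Real.log n)) / 128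
      = ((n:ℝ)/8 * Real.exp (-4 * Real.sqrt (Real.log n))) * ((n:ℝ)/16 * (n:ℝ)^(k-2)) := by
        rw [hsplit]; ring
    _ ≤ ((q:ℝ) * Real.exp (-4 * Real.sqrt (Real.log q))) * ((s:ℝ) * (n:ℝ)^(k-2)) := key
    _ ≤ ((rothNumberNat q : ℝ)) * ((s:ℝ) * (n:ℝ)^(k-2)) :=
        mul_le_mul_of_nonneg_right hroth (by positivity)
    _ ≤ (cornerFreeNumber k n : ℝ) := hcast

open Filter in
lemma eventually_key (k : ℕ) :
    ∀ᶠ n : ℕ in atTop, (2 * Real.log n)^(3*k+1) * 128^(k+1) *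
      Real.exp (4*((k:ℝ)+1) * Real.sqrt (Real.log n)) ≤ (n:ℝ) := by
  have hlog : Tendsto (fun n : ℕ => Real.log n) atTop atTop :=
    Real.tendsto_log_atTop.comp tendsto_natCast_atTop_atTop
  set m := 3*k+1 with hm
  have hdiv : Tendsto (fun L : ℝ => L/4) atTop atTop :=
    Filter.Tendsto.atTop_div_const (by norm_num) tendsto_id
  have hE1' := ((Real.tendsto_exp_div_pow_atTop m).comp hdiv).comp hlog
  have hE1 := hE1'.eventually_ge_atTop ((8:ℝ)^m)
  have hL1 := hlog.eventually_ge_atTop (1:ℝ)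
  have hE2 := hlog.eventually_ge_atTop (4 * Real.log ((128:ℝ)^(k+1)))
  have hE3 := hlog.eventually_ge_atTop (((8:ℝ)*(k+1))^2)
  have hn1 := Filter.eventually_ge_atTop (1:ℕ)
  filter_upwards [hE1, hL1, hE2, hE3, hn1] with n h1 h2 h3 h4 h5
  simp only [Function.comp] at h1
  set L := Real.log n with hL
  have hLpos : (0:ℝ) < L := lt_of_lt_of_le one_pos h2
  have e1 : (2*L)^m ≤ Real.exp (L/4) := by
    have hq : (0:ℝ) < (L/4)^m := by positivity
    have h1' : (8:ℝ)^m * (L/4)^m ≤ Real.exp (L/4) := by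
      rw [← le_div_iff₀ hq]; exact h1
    calc (2*L)^m = (8*(L/4))^m := by congr 1; ring
      _ = 8^m * (L/4)^m := mul_pow _ _ _
      _ ≤ Real.exp (L/4) := h1'
  have e2 : (128:ℝ)^(k+1) ≤ Real.exp (L/4) := by
    have hpos : (0:ℝ) < 128^(k+1) := by positivity
    calc (128:ℝ)^(k+1) = Real.exp (Real.log ((128:ℝ)^(k+1))) := (Real.exp_log hpos).symm
      _ ≤ Real.exp (L/4) := Real.exp_le_exp.2 (by linarith)
  have e3 : Real.exp (4*((k:ℝ)+1) * Real.sqrt L) ≤ Real.exp (L/2) := by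
    apply Real.exp_le_exp.2
    have hs : (8:ℝ)*(k+1) ≤ Real.sqrt L := by
      have := Real.sqrt_le_sqrt h4
      rwa [Real.sqrt_sq (by positivity)] at this
    have hsq : Real.sqrt L * Real.sqrt L = L := Real.mul_self_sqrt hLpos.le
    nlinarith [Real.sqrt_nonneg L]
  have hnR : Real.exp L = (n:ℝ) := Real.exp_log (by exact_mod_cast h5)
  calc (2*L)^m * 128^(k+1) * Real.exp (4*((k:ℝ)+1) * Real.sqrt L)
      ≤ (Real.exp (L/4) * Real.exp (L/4)) * Real.exp (L/2) := by
        apply mul_le_mul _ e3 (Real.exp_pos _).le (by positivity)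
        exact mul_le_mul e1 e2 (by positivity) (Real.exp_pos _).le
    _ = Real.exp L := by rw [← Real.exp_add, ← Real.exp_add]; congr 1; ring
    _ = (n:ℝ) := hnR

/-- Supersaturation for `k`-dimensional corners: for `k ≥ 3` there exist a constant
`C' = C'(k)` and an infinite (strictly increasing) sequence of positive integers `n_i` such
that every `A ⊆ [n]^k` of size at least `C'·c_k(n)` with `n = n_i` satisfies
`Γ_k(A) ≥ (log n)^(3k+1) · (n^k/c_k(n))^k · n^(k−1)`. Logarithms are base 2. -/
theorem corner_supersaturation (k : ℕ) (hk : 3 ≤ k) :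
    ∃ C' : ℝ, ∃ nseq : ℕ → ℕ, StrictMono nseq ∧ (∀ i, 0 < nseq i) ∧
      ∀ i : ℕ, ∀ A : Finset (Fin k → ℕ), A ⊆ gridNk k (nseq i) →
        C' * (cornerFreeNumber k (nseq i) : ℝ) ≤ (A.card : ℝ) →
        (Real.logb 2 (nseq i : ℝ)) ^ (3 * k + 1) *
            ((nseq i : ℝ) ^ k / (cornerFreeNumber k (nseq i) : ℝ)) ^ k *
            (nseq i : ℝ) ^ (k - 1) ≤
          (cornerCount k (nseq i) A : ℝ) := by
  obtain ⟨N, hN⟩ := Filter.eventually_atTop.1 (eventually_key k)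
  refine ⟨2, fun i => N + 64 + i, ?_, ?_, ?_⟩
  · intro a b hab
    show N + 64 + a < N + 64 + b
    omega
  · intro i
    show 0 < N + 64 + i
    omega
  · intro i A hA hAcard
    set n := N + 64 + i with hndef
    have hn64 : 64 ≤ n := by omega
    have hkey := hN n (by omega)
    have hc := cFN_lower_real k n hk hn64
    set L := Real.log n with hL
    set c := (cornerFreeNumber k n : ℝ) with hcdef
    have hE : (0:ℝ) < Real.exp (-4*Real.sqrt L) := Real.exp_pos _
    have hnR : (1:ℝ) ≤ (n:ℝ) := by exact_mod_cast (by omega : 1 ≤ n)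
    have hnpos : (0:ℝ) < (n:ℝ) := by linarith
    have hcpos : (0:ℝ) < c := lt_of_lt_of_le (by positivity) hc
    have hcnt := card_le_count_add k n A hA
    have hΓ : c ≤ (cornerCount k n A : ℝ) := by
      have h6 : (A.card:ℝ) ≤ (cornerCount k n A : ℝ) + (cornerFreeNumber k n : ℝ) := by
        exact_mod_cast hcnt
      rw [hcdef]
      rw [hcdef] at hAcard
      linarith [hAcard]
    have hLnn : (0:ℝ) ≤ L := Real.log_nonneg hnR
    have hlogb : Real.logb 2 n ≤ 2*L := by
      rw [Real.logb, div_le_iff₀ (Real.log_pos (by norm_num))]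
      nlinarith [Real.log_two_gt_d9]
    have hlogbnn : 0 ≤ Real.logb 2 n := Real.logb_nonneg (by norm_num) hnR
    have h1 : (Real.logb 2 n)^(3*k+1) ≤ (2*L)^(3*k+1) := pow_le_pow_left₀ hlogbnn hlogb _
    have hprod1 : Real.exp (4*Real.sqrt L) * Real.exp (-4*Real.sqrt L) = 1 := by
      rw [← Real.exp_add]
      norm_num
    have h2 : (n:ℝ)^k / c ≤ 128 * Real.exp (4*Real.sqrt L) := by
      rw [div_le_iff₀ hcpos]
      have hmm := mul_le_mul_of_nonneg_left hc
        (show (0:ℝ) ≤ 128 * Real.exp (4*Real.sqrt L) by positivity)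
      have hEq : (128 * Real.exp (4*Real.sqrt L)) * ((n:ℝ)^k * Real.exp (-4*Real.sqrt L)/128)
          = (n:ℝ)^k := by
        calc (128 * Real.exp (4*Real.sqrt L)) * ((n:ℝ)^k * Real.exp (-4*Real.sqrt L)/128)
            = (n:ℝ)^k * (Real.exp (4*Real.sqrt L) * Real.exp (-4*Real.sqrt L)) := by ring
          _ = (n:ℝ)^k := by rw [hprod1, mul_one]
      linarith [hmm, hEq.ge]
    have h2' : ((n:ℝ)^k / c)^k ≤ (128 * Real.exp (4*Real.sqrt L))^k :=
      pow_le_pow_left₀ (by positivity) h2 k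
    have h3 : (Real.logb 2 n)^(3*k+1) * ((n:ℝ)^k / c)^k * (n:ℝ)^(k-1)
        ≤ (2*L)^(3*k+1) * (128 * Real.exp (4*Real.sqrt L))^k * (n:ℝ)^(k-1) := by
      apply mul_le_mul_of_nonneg_right _ (by positivity)
      exact mul_le_mul h1 h2' (by positivity) (by positivity)
    have hexp2 : Real.exp (4*((k:ℝ)+1)*Real.sqrt L) * Real.exp (-4*Real.sqrt L)
        = Real.exp ((k:ℝ)*(4*Real.sqrt L)) := by rw [← Real.exp_add]; congr 1; ring
    have hnk : (n:ℝ)^k = (n:ℝ)^(k-1) * n := by rw [← pow_succ]; congr 1; omega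
    have h4 : (2*L)^(3*k+1) * (128 * Real.exp (4*Real.sqrt L))^k * (n:ℝ)^(k-1)
        ≤ (n:ℝ)^k * Real.exp (-4*Real.sqrt L)/128 := by
      have hmul := mul_le_mul_of_nonneg_right hkey
        (show (0:ℝ) ≤ (n:ℝ)^(k-1) * Real.exp (-4*Real.sqrt L)/128 by positivity)
      calc (2*L)^(3*k+1) * (128 * Real.exp (4*Real.sqrt L))^k * (n:ℝ)^(k-1)
          = ((2*L)^(3*k+1) * 128^(k+1) * Real.exp (4*((k:ℝ)+1)*Real.sqrt L))
              * ((n:ℝ)^(k-1) * Real.exp (-4*Real.sqrt L)/128) := by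
            rw [mul_pow 128 (Real.exp (4*Real.sqrt L)) k, ← Real.exp_nat_mul, pow_succ (128:ℝ) k, ← hexp2]; ring
        _ ≤ (n:ℝ) * ((n:ℝ)^(k-1) * Real.exp (-4*Real.sqrt L)/128) := hmul
        _ = (n:ℝ)^k * Real.exp (-4*Real.sqrt L)/128 := by rw [hnk]; ring
    linarith [h3, h4, hc, hΓ]
end

section
/- Let k ≥ 2 be an integer and K ≥ 2 a real number. If A ⊆ [n]^k satisfies |A| ≥ K·c_k(n), then Γ_k(A) ≥ (K/2)^{k+1}·c_k(n). -/
/-! Keep each point of `A` independently with probability `p = 2 / K`, giving a random set `S`.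
Deleting one point from each corner in `S` leaves a corner-free set, so `|S| ≤ Γ(S) + c_k(n)`.
Taking expectations, `p ^ (k + 1) Γ(A) ≥ p |A| - c_k(n) ≥ c_k(n)`. Only the sizes of the corners
and of the corner-free sets enter, so the argument works for any uniform hypergraph. -/

open Finset

section Sampling

variable {α : Type*}

/-- The probability that the random subset of `A` which keeps each point independently with
probability `p` is `S`. -/
def sampleWeight (p : ℝ) (A S : Finset α) : ℝ :=
  p ^ #S * (1 - p) ^ (#A - #S)

theorem sampleWeight_nonneg {p : ℝ} (hp0 : 0 ≤ p) (hp1 : p ≤ 1) (A S : Finset α) :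
    0 ≤ sampleWeight p A S :=
  mul_nonneg (pow_nonneg hp0 _) (pow_nonneg (sub_nonneg.2 hp1) _)

theorem sum_sampleWeight (p : ℝ) (A : Finset α) : ∑ S ∈ A.powerset, sampleWeight p A S = 1 := by
  simp only [sampleWeight, sum_pow_mul_eq_add_pow, add_sub_cancel, one_pow]

variable [DecidableEq α]

theorem Finset.sum_Icc_pow_mul_pow_sub {R : Type*} [CommSemiring R] {C A : Finset α}
    (h : C ⊆ A) (a b : R) :
    ∑ S ∈ Icc C A, a ^ #S * b ^ (#A - #S) = a ^ #C * (a + b) ^ (#A - #C) := by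
  have hdisj : ∀ T ∈ (A \ C).powerset, Disjoint C T := fun T hT =>
    disjoint_of_subset_right (mem_powerset.1 hT) disjoint_sdiff
  have hinj : Set.InjOn (C ∪ ·) ((A \ C).powerset : Set (Finset α)) := fun T hT T' hT' hTT' => by
    rw [← union_sdiff_cancel_left (hdisj T hT), ← union_sdiff_cancel_left (hdisj T' hT')]
    exact congrArg (· \ C) hTT'
  rw [Icc_eq_image_powerset h, sum_image hinj, ← card_sdiff_of_subset h,
    ← sum_pow_mul_eq_add_pow, mul_sum]
  refine sum_congr rfl fun T hT => ?_
  have hTC : #T ≤ #(A \ C) := card_le_card (mem_powerset.1 hT)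
  rw [card_union_of_disjoint (hdisj T hT), card_sdiff_of_subset h, pow_add, mul_assoc]
  congr 3
  have := card_le_card h
  omega

theorem Finset.filter_filter_powerset_of_subset {S A : Finset α} (h : S ⊆ A) (P : Finset α → Prop)
    [DecidablePred P] : {C ∈ {C ∈ A.powerset | P C} | C ⊆ S} = {C ∈ S.powerset | P C} := by
  ext C
  simp only [mem_filter, mem_powerset]
  exact ⟨fun ⟨⟨_, hC⟩, hCS⟩ => ⟨hCS, hC⟩, fun ⟨hCS, hC⟩ => ⟨⟨hCS.trans h, hC⟩, hCS⟩⟩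

theorem sum_Icc_sampleWeight (p : ℝ) {C A : Finset α} (h : C ⊆ A) :
    ∑ S ∈ Icc C A, sampleWeight p A S = p ^ #C := by
  simp only [sampleWeight, sum_Icc_pow_mul_pow_sub h, add_sub_cancel, one_pow, mul_one]

theorem sum_sampleWeight_mul_card_filter_subset (p : ℝ) {A : Finset α} {𝒞 : Finset (Finset α)}
    (h𝒞 : ∀ C ∈ 𝒞, C ⊆ A) :
    ∑ S ∈ A.powerset, sampleWeight p A S * #{C ∈ 𝒞 | C ⊆ S} = ∑ C ∈ 𝒞, p ^ #C := by
  simp_rw [card_filter, Nat.cast_sum, mul_sum]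
  rw [sum_comm]
  refine sum_congr rfl fun C hC => ?_
  rw [← sum_Icc_sampleWeight p (h𝒞 C hC), Icc_eq_filter_powerset, sum_filter]
  refine sum_congr rfl fun S _ => ?_
  split_ifs <;> simp

theorem sum_sampleWeight_mul_card (p : ℝ) (A : Finset α) :
    ∑ S ∈ A.powerset, sampleWeight p A S * #S = p * #A := by
  calc ∑ S ∈ A.powerset, sampleWeight p A S * #S
      = ∑ S ∈ A.powerset, sampleWeight p A S * #{C ∈ A.powersetCard 1 | C ⊆ S} := by
        refine sum_congr rfl fun S hS => ?_
        rw [powersetCard_eq_filter, filter_filter_powerset_of_subset (mem_powerset.1 hS),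
          ← powersetCard_eq_filter, card_powersetCard, Nat.choose_one_right]
    _ = ∑ C ∈ A.powersetCard 1, p ^ #C :=
        sum_sampleWeight_mul_card_filter_subset p fun C hC => (mem_powersetCard.1 hC).1
    _ = p * #A := by
        rw [sum_congr rfl (g := fun _ => p) fun C hC => by rw [(mem_powersetCard.1 hC).2, pow_one],
          sum_const, card_powersetCard, Nat.choose_one_right, nsmul_eq_mul, mul_comm]

end Sampling

section Supersaturation

variable {α : Type*} [DecidableEq α] {E : Finset α → Prop} [DecidablePred E] {A : Finset α} {m : ℕ}

theorem card_le_card_filter_powerset_add (hE : ∀ C, E C → C.Nonempty)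
    (hm : ∀ S ⊆ A, (∀ C ⊆ S, ¬ E C) → #S ≤ m) :
    ∀ S ⊆ A, #S ≤ #{C ∈ S.powerset | E C} + m := by
  intro S
  induction S using Finset.strongInduction with
  | H S ih =>
    intro hSA
    by_cases hfree : ∀ C ⊆ S, ¬ E C
    · exact le_add_left (hm S hSA hfree)
    push Not at hfree
    obtain ⟨C, hCS, hC⟩ := hfree
    obtain ⟨x, hx⟩ := hE C hC
    have hxS : x ∈ S := hCS hx
    -- Deleting a point of the edge `C` loses at least the edge `C`.
    have hlt : #{C ∈ (S.erase x).powerset | E C} < #{C ∈ S.powerset | E C} := by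
      refine card_lt_card ((ssubset_iff_of_subset ?_).2 ⟨C, ?_, ?_⟩)
      · exact filter_subset_filter _ (powerset_mono.2 (erase_subset x S))
      · exact mem_filter.2 ⟨mem_powerset.2 hCS, hC⟩
      · exact fun h => notMem_erase x S (mem_powerset.1 (mem_filter.1 h).1 hx)
    have := ih (S.erase x) (erase_ssubset hxS) ((erase_subset x S).trans hSA)
    have := card_erase_add_one hxS
    omega

theorem mul_card_sub_le_pow_mul_card_filter_powerset {r : ℕ} {p : ℝ} (hp0 : 0 ≤ p) (hp1 : p ≤ 1)
    (hr : 0 < r) (hE : ∀ C, E C → #C = r) (hm : ∀ S ⊆ A, (∀ C ⊆ S, ¬ E C) → #S ≤ m) :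
    p * #A - m ≤ p ^ r * #{C ∈ A.powerset | E C} := by
  have hne : ∀ C, E C → C.Nonempty := fun C hC => card_pos.1 (hE C hC ▸ hr)
  calc p * #A - m = ∑ S ∈ A.powerset, sampleWeight p A S * (#S - m) := by
        simp only [mul_sub, sum_sub_distrib, sum_sampleWeight_mul_card, ← sum_mul,
          sum_sampleWeight, one_mul]
    _ ≤ ∑ S ∈ A.powerset, sampleWeight p A S * #{C ∈ S.powerset | E C} := by
        refine sum_le_sum fun S hS => mul_le_mul_of_nonneg_left ?_ (sampleWeight_nonneg hp0 hp1 A S)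
        rw [sub_le_iff_le_add]
        exact_mod_cast card_le_card_filter_powerset_add hne hm S (mem_powerset.1 hS)
    _ = ∑ S ∈ A.powerset, sampleWeight p A S * #{C ∈ {C ∈ A.powerset | E C} | C ⊆ S} := by
        refine sum_congr rfl fun S hS => ?_
        rw [filter_filter_powerset_of_subset (mem_powerset.1 hS)]
    _ = p ^ r * #{C ∈ A.powerset | E C} := by
        rw [sum_sampleWeight_mul_card_filter_subset p
            fun C hC => mem_powerset.1 (mem_filter.1 hC).1,
          sum_congr rfl (g := fun _ => p ^ r) fun C hC => by rw [hE C (mem_filter.1 hC).2],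
          sum_const, nsmul_eq_mul, mul_comm]

theorem pow_mul_le_card_filter_powerset {r : ℕ} {K : ℝ} (hK : 2 ≤ K) (hr : 0 < r)
    (hE : ∀ C, E C → #C = r) (hm : ∀ S ⊆ A, (∀ C ⊆ S, ¬ E C) → #S ≤ m)
    (hA : K * m ≤ #A) :
    (K / 2) ^ r * m ≤ #{C ∈ A.powerset | E C} := by
  have hK0 : 0 < K := by linarith
  have hsample := mul_card_sub_le_pow_mul_card_filter_powerset (p := 2 / K) (by positivity)
    ((div_le_one hK0).2 hK) hr hE hm
  have hm_le : (m : ℝ) ≤ 2 / K * #A - m := by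
    rw [div_mul_eq_mul_div, le_sub_iff_add_le, le_div_iff₀ hK0]
    linarith
  calc (K / 2) ^ r * m ≤ (K / 2) ^ r * ((2 / K) ^ r * #{C ∈ A.powerset | E C}) := by
        gcongr
        linarith
    _ = #{C ∈ A.powerset | E C} := by
        rw [← mul_assoc, ← mul_pow, div_mul_div_cancel₀ (by norm_num), div_self hK0.ne', one_pow,
          one_mul]

end Supersaturation

theorem IsGridCorner.card_eq {k n : ℕ} {C : Finset (Fin k → ℕ)} (h : IsGridCorner k n C) :
    #C = k + 1 := by
  obtain ⟨a, d, hd, rfl, -⟩ := h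
  have hinj : Function.Injective fun i => Function.update a i (a i + d) := fun i j hij => by
    by_contra hne
    have := congrFun hij i
    simp only [Function.update_self, Function.update_of_ne hne] at this
    omega
  have ha : a ∉ univ.image fun i => Function.update a i (a i + d) := by
    simp only [mem_image, mem_univ, true_and, not_exists]
    intro i hi
    have := congrFun hi i
    rw [Function.update_self] at this
    omega
  rw [card_insert_of_notMem ha, card_image_of_injective _ hinj, card_univ, Fintype.card_fin]

theorem card_le_cornerFreeNumber {k n : ℕ} {S : Finset (Fin k → ℕ)} (hS : S ⊆ gridNk k n)
    (hfree : GridCornerFree k n S) : #S ≤ cornerFreeNumber k n :=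
  le_csSup ⟨#(gridNk k n), fun _ ⟨_, hB, _, hm⟩ => hm ▸ card_le_card hB⟩ ⟨S, hS, hfree, rfl⟩

theorem cornerCount_eq_card_filter_powerset (k n : ℕ) [DecidablePred (IsGridCorner k n)]
    (A : Finset (Fin k → ℕ)) : cornerCount k n A = #{C ∈ A.powerset | IsGridCorner k n C} := by
  rw [cornerCount, ← Set.ncard_coe_finset]
  congr 1
  ext C
  simp [and_comm]

theorem corner_supersaturation_improved_general (k : ℕ) (K : ℝ) (hK : 2 ≤ K)
    (n : ℕ) (A : Finset (Fin k → ℕ)) (hA : A ⊆ gridNk k n)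
    (hcard : K * (cornerFreeNumber k n : ℝ) ≤ (A.card : ℝ)) :
    (K / 2) ^ (k + 1) * (cornerFreeNumber k n : ℝ) ≤ (cornerCount k n A : ℝ) := by
  classical
  rw [cornerCount_eq_card_filter_powerset]
  refine pow_mul_le_card_filter_powerset hK k.succ_pos (fun _ => IsGridCorner.card_eq) ?_ hcard
  exact fun S hS hfree => card_le_cornerFreeNumber (hS.trans hA) fun C hC hCS => hfree C hCS hC

/-- Improved supersaturation: if `k ≥ 2`, `K ≥ 2` and `A ⊆ [n]^k` has `|A| ≥ K·c_k(n)`,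
then `Γ_k(A) ≥ (K/2)^(k+1)·c_k(n)`. -/
theorem corner_supersaturation_improved (k : ℕ) (hk : 2 ≤ k) (K : ℝ) (hK : 2 ≤ K)
    (n : ℕ) (hn : 0 < n) (A : Finset (Fin k → ℕ)) (hA : A ⊆ gridNk k n)
    (hcard : K * (cornerFreeNumber k n : ℝ) ≤ (A.card : ℝ)) :
    (K / 2) ^ (k + 1) * (cornerFreeNumber k n : ℝ) ≤ (cornerCount k n A : ℝ) :=
  corner_supersaturation_improved_general k K hK n A hA hcard
end

section
/- For every integer k ≥ 2 there exists a positive constant α_k, depending only on k, such that for all sufficiently large n, c_k(n)/n^k > 2^{−α_k·(log n)^{β_k}}, where β_k = 1/⌈log₂ k⌉. -/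
/-!
Rankin's construction. Call `S ⊆ ℤ` free of degree `≤ E` if no `L` consecutive values of a
polynomial of degree `e ∈ [1, E]` with positive leading coefficient lie in `S`. Given such an
`S' ⊆ [0, D M²]` free of degree `≤ 2E`, take the points `z ∈ [0, M)^D` with `‖z‖² - t ∈ S'`
(a shift `t` found by pigeonhole keeps a `1 / (2DM² + 1)` fraction of the box) and read them as
base-`B` numbers, `B = 2^(L+2) M`. The result is free of degree `≤ E`: `B` is so large that the
digits of a polynomial sequence of degree `e` never carry, so each digit sequence has degree
`≤ e`, and then `‖z‖²` runs through a polynomial of degree exactly `2e`. Halving the degree from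
`2^(m-1)`, `m = ⌈log₂ k⌉`, down to `1`, starting from single points and taking `N ≈ 2^(b^m)` at
cost `2^(O(b))` per level, gives a subset of `[0, N)` of density `2^(-O((log N)^(1/m)))` without
`(k+1)`-term progressions. The weighted sum `∑ (i+1) xᵢ` maps every corner of `[n]^k` to a
`(k+1)`-term progression, so one of the shifted preimages of that set is corner-free and has the
same density.
-/

open Finset
local notation "Δ" => fwdDiff (1 : ℕ)

namespace Rankin

section FiniteDifferences

variable {G : Type*} [AddCommGroup G]

lemma fwdDiff_iter_succ_apply (f : ℕ → G) (n x : ℕ) :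
    Δ^[n + 1] f x = Δ^[n] f (x + 1) - Δ^[n] f x := by
  rw [Function.iterate_succ_apply']; rfl

lemma fwdDiff_iter_congr {f g : ℕ → G} {n x : ℕ} (h : ∀ j ≤ n, f (x + j) = g (x + j)) :
    Δ^[n] f x = Δ^[n] g x := by
  simp only [fwdDiff_iter_eq_sum_shift, smul_eq_mul, mul_one]
  exact sum_congr rfl fun j hj => by rw [h j (Nat.lt_succ_iff.1 (mem_range.1 hj))]

lemma fwdDiff_iter_const (c : G) {n : ℕ} (hn : n ≠ 0) :
    Δ^[n] (fun _ => c) = fun _ => 0 := by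
  obtain ⟨n, rfl⟩ := Nat.exists_eq_succ_of_ne_zero hn
  rw [Function.iterate_succ_apply, fwdDiff_const]
  exact Function.iterate_fixed (fwdDiff_const 1 0) n

lemma fwdDiff_iter_sub_const (f : ℕ → G) (c : G) {n : ℕ} (hn : n ≠ 0) :
    Δ^[n] (fun x => f x - c) = Δ^[n] f := by
  obtain ⟨n, rfl⟩ := Nat.exists_eq_succ_of_ne_zero hn
  rw [Function.iterate_succ_apply, Function.iterate_succ_apply]
  congr 1
  ext x
  simp [fwdDiff]

lemma abs_fwdDiff_iter_le {f : ℕ → ℤ} {K : ℤ} {n x : ℕ} (h : ∀ j ≤ n, |f (x + j)| ≤ K) :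
    |Δ^[n] f x| ≤ 2 ^ n * K := by
  induction n generalizing x with
  | zero => simpa using h 0 le_rfl
  | succ n ih =>
    have h₁ := ih (x := x + 1) fun j hj => by rw [add_right_comm]; exact h (j + 1) (by omega)
    have h₀ := ih (x := x) fun j hj => h j (by omega)
    rw [fwdDiff_iter_succ_apply, pow_succ]
    linarith [abs_sub (Δ^[n] f (x + 1)) (Δ^[n] f x)]

lemma fwdDiff_iter_mul {R : Type*} [Ring R] (f g : ℕ → R) (n x : ℕ) :
    Δ^[n] (f * g) x = ∑ ij ∈ antidiagonal n,
      (n.choose ij.1 : R) * (Δ^[ij.1] f x * Δ^[ij.2] g (x + ij.1)) := by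
  induction n generalizing f g with
  | zero => simp
  | succ n ih =>
    have hstep : Δ (f * g) = Δ f * (fun y => g (y + 1)) + f * Δ g := by
      ext y; simp only [fwdDiff, Pi.mul_apply, Pi.add_apply]; noncomm_ring
    rw [Function.iterate_succ_apply, hstep, fwdDiff_iter_add, Pi.add_apply, ih, ih,
      sum_antidiagonal_choose_succ_mul (fun i j => Δ^[i] f x * Δ^[j] g (x + i)), add_comm]
    congr 1
    refine sum_congr rfl fun ij hij => ?_
    rw [Nat.choose_symm_of_eq_add (HasAntidiagonal.mem_antidiagonal.1 hij).symm,
      ← Function.iterate_succ_apply, fwdDiff_iter_comp_add, add_assoc]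

/-- `f` agrees on `[0, L)` with a polynomial of degree at most `e`. -/
def DegreeLEOn (L e : ℕ) (f : ℕ → G) : Prop :=
  ∀ x, x + (e + 1) < L → Δ^[e + 1] f x = 0

variable {L e : ℕ} {f g : ℕ → G}

lemma DegreeLEOn.congr (hf : DegreeLEOn L e f) (h : ∀ x < L, f x = g x) : DegreeLEOn L e g :=
  fun x hx => by rw [← fwdDiff_iter_congr fun j _ => h (x + j) (by omega)]; exact hf x hx

lemma DegreeLEOn.sub_const (hf : DegreeLEOn L e f) (c : G) :
    DegreeLEOn L e fun x => f x - c :=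
  fun x hx => by rw [fwdDiff_iter_sub_const f c (by omega)]; exact hf x hx

lemma DegreeLEOn.sum {ι : Type*} {s : Finset ι} {F : ι → ℕ → G}
    (hF : ∀ i ∈ s, DegreeLEOn L e (F i)) : DegreeLEOn L e (∑ i ∈ s, F i) :=
  fun x hx => by
    rw [fwdDiff_iter_finsetSum, Finset.sum_apply]; exact sum_eq_zero fun i hi => hF i hi x hx

lemma DegreeLEOn.fwdDiff_iter_eq_zero (hf : DegreeLEOn L e f) {n x : ℕ} (hn : e < n)
    (hx : x + n < L) : Δ^[n] f x = 0 := by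
  obtain ⟨k, rfl⟩ := Nat.exists_eq_add_of_lt hn
  rw [show e + k + 1 = k + (e + 1) by omega, Function.iterate_add_apply,
    fwdDiff_iter_congr (g := fun _ => 0) fun j _ => hf (x + j) (by omega)]
  exact congrFun (Function.iterate_fixed (fwdDiff_const 1 (0 : G)) k) x

lemma DegreeLEOn.fwdDiff_iter_eq (hf : DegreeLEOn L e f) {x : ℕ} (hx : x + e < L) :
    Δ^[e] f x = Δ^[e] f 0 := by
  induction x with
  | zero => rfl
  | succ x ih =>
    have h := hf x (by omega)
    rw [fwdDiff_iter_succ_apply, sub_eq_zero] at h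
    rw [h, ih (by omega)]

variable {R : Type*} [Ring R] {a b : ℕ} {f g : ℕ → R}

lemma DegreeLEOn.mul (hf : DegreeLEOn L a f) (hg : DegreeLEOn L b g) :
    DegreeLEOn L (a + b) (f * g) := by
  intro x hx
  rw [fwdDiff_iter_mul]
  refine sum_eq_zero fun ij hij => ?_
  simp only [HasAntidiagonal.mem_antidiagonal] at hij
  rcases lt_or_ge a ij.1 with ha | ha
  · rw [hf.fwdDiff_iter_eq_zero ha (by omega), zero_mul, mul_zero]
  · rw [hg.fwdDiff_iter_eq_zero (by omega : b < ij.2) (by omega), mul_zero, mul_zero]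

lemma DegreeLEOn.fwdDiff_iter_add_mul (hf : DegreeLEOn L a f) (hg : DegreeLEOn L b g)
    (hab : a + b < L) :
    Δ^[a + b] (f * g) 0 = ((a + b).choose a : R) * (Δ^[a] f 0 * Δ^[b] g 0) := by
  rw [fwdDiff_iter_mul, sum_eq_single_of_mem (a, b) (HasAntidiagonal.mem_antidiagonal.2 rfl),
    zero_add, hg.fwdDiff_iter_eq (by omega)]
  rintro ⟨i, j⟩ hij hne
  simp only [HasAntidiagonal.mem_antidiagonal] at hij ⊢
  rcases lt_trichotomy a i with ha | rfl | ha
  · rw [hf.fwdDiff_iter_eq_zero ha (by omega), zero_mul, mul_zero]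
  · exact (hne (by rw [show j = b by omega])).elim
  · rw [hg.fwdDiff_iter_eq_zero (by omega : b < j) (by omega), mul_zero, mul_zero]

end FiniteDifferences

section Patterns

variable {L e : ℕ} {v w : ℕ → ℤ}

/-- `v` is, on `[0, L)`, a polynomial of degree exactly `e` with positive leading coefficient. -/
def IsPolyPattern (L e : ℕ) (v : ℕ → ℤ) : Prop :=
  e < L ∧ DegreeLEOn L e v ∧ 0 < Δ^[e] v 0

def PatternFree (S : Finset ℤ) (L E : ℕ) : Prop :=
  ∀ e ∈ Set.Icc 1 E, ∀ v, IsPolyPattern L e v → ∃ x < L, v x ∉ S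

lemma IsPolyPattern.congr (hv : IsPolyPattern L e v) (h : ∀ x < L, v x = w x) :
    IsPolyPattern L e w := by
  obtain ⟨he, hdeg, hpos⟩ := hv
  refine ⟨he, hdeg.congr h, ?_⟩
  rwa [← fwdDiff_iter_congr fun j hj => h (0 + j) (by omega)]

lemma IsPolyPattern.sub_const (hv : IsPolyPattern L e v) (he : e ≠ 0) (c : ℤ) :
    IsPolyPattern L e fun x => v x - c := by
  obtain ⟨heL, hdeg, hpos⟩ := hv
  exact ⟨heL, hdeg.sub_const c, by rwa [fwdDiff_iter_sub_const v c he]⟩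

lemma isPolyPattern_one {a d : ℤ} (hd : 0 < d) (hL : 1 < L) :
    IsPolyPattern L 1 fun x => a + x * d := by
  refine ⟨hL, fun x _ => ?_, by simpa [fwdDiff] using hd⟩
  simp only [Function.iterate_succ, Function.iterate_zero, Function.comp_apply, id, fwdDiff]
  push_cast
  ring

lemma patternFree_singleton (y : ℤ) (L E : ℕ) : PatternFree {y} L E := by
  rintro e ⟨he, -⟩ v ⟨heL, -, hpos⟩
  by_contra! hv
  rw [fwdDiff_iter_congr (g := fun _ => y) fun j hj => mem_singleton.1 (hv (0 + j) (by omega)),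
    fwdDiff_iter_const y (by omega)] at hpos
  exact hpos.false

end Patterns

section Digits

variable {D : ℕ}

def digitsEval (B : ℤ) (z : Fin D → ℤ) : ℤ := ∑ d, z d * B ^ (d : ℕ)

lemma digitsEval_succ (B : ℤ) (z : Fin (D + 1) → ℤ) :
    digitsEval B z = z 0 + B * digitsEval B (Fin.tail z) := by
  simp only [digitsEval, Fin.sum_univ_succ, Fin.val_zero, pow_zero, mul_one, Fin.val_succ,
    pow_succ, mul_sum, Fin.tail]
  congr 1
  exact sum_congr rfl fun d _ => by ring

lemma eq_zero_of_digitsEval_eq_zero {B : ℤ} :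
    ∀ {D : ℕ} {w : Fin D → ℤ}, (∀ d, 2 * |w d| < B) → digitsEval B w = 0 → w = 0
  | 0, _, _, _ => Subsingleton.elim _ _
  | D + 1, w, hw, h => by
    rw [digitsEval_succ] at h
    set t := digitsEval B (Fin.tail w)
    have ht : t = 0 := by
      by_contra ht
      have h₁ : |w 0| = |B| * |t| := by rw [eq_neg_of_add_eq_zero_left h, abs_neg, abs_mul]
      nlinarith [hw 0, Int.one_le_abs ht, le_abs_self B, abs_nonneg B]
    have hw0 : w 0 = 0 := by rwa [ht, mul_zero, add_zero] at h
    have htail := eq_zero_of_digitsEval_eq_zero (fun d => hw d.succ) ht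
    ext d
    exact Fin.cases hw0 (fun d => congrFun htail d) d

lemma digitsEval_mem_Ico {B : ℤ} :
    ∀ {D : ℕ} {z : Fin D → ℤ}, (∀ d, z d ∈ Ico 0 B) → digitsEval B z ∈ Ico 0 (B ^ D)
  | 0, _, _ => by simp [digitsEval]
  | D + 1, z, hz => by
    have ih := mem_Ico.1 (digitsEval_mem_Ico (z := Fin.tail z) fun d => hz d.succ)
    have h₀ := mem_Ico.1 (hz 0)
    rw [digitsEval_succ, mem_Ico, pow_succ']
    constructor <;> nlinarith [h₀.1.trans_lt h₀.2]

lemma digitsEval_injOn {B M : ℤ} (hMB : 2 * M ≤ B) :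
    Set.InjOn (digitsEval B) (Fintype.piFinset fun _ : Fin D => Ico 0 M : Set (Fin D → ℤ)) := by
  intro z₁ h₁ z₂ h₂ he
  simp only [mem_coe, Fintype.mem_piFinset, mem_Ico] at h₁ h₂
  refine sub_eq_zero.1 (eq_zero_of_digitsEval_eq_zero (B := B) (fun d => ?_) ?_)
  · have := h₁ d; have := h₂ d
    have : |z₁ d - z₂ d| < M := abs_sub_lt_iff.2 ⟨by omega, by omega⟩
    rw [Pi.sub_apply]
    linarith
  · simp only [digitsEval, Pi.sub_apply, sub_mul, sum_sub_distrib]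
    exact sub_eq_zero.2 he

lemma fwdDiff_iter_digitsEval (B : ℤ) (Z : ℕ → Fin D → ℤ) (n x : ℕ) :
    Δ^[n] (fun y => digitsEval B (Z y)) x = digitsEval B fun d => Δ^[n] (fun y => Z y d) x := by
  have h : (fun y => digitsEval B (Z y)) = ∑ d : Fin D, B ^ (d : ℕ) • fun y => Z y d := by
    ext y; simp [digitsEval, mul_comm]
  rw [h, fwdDiff_iter_finsetSum]
  simp only [digitsEval, fwdDiff_iter_const_smul, Finset.sum_apply, Pi.smul_apply, smul_eq_mul,
    mul_comm]

end Digits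

lemma exists_card_mul_le_card_filter_sub_mem {γ α : Type*} [AddCommGroup α] [DecidableEq α]
    {G : Finset γ} {S T : Finset α} (ψ : γ → α) (hT : ∀ g ∈ G, ∀ y ∈ S, ψ g - y ∈ T)
    (hTne : T.Nonempty) : ∃ t ∈ T, #G * #S ≤ #T * #{g ∈ G | ψ g - t ∈ S} := by
  have hfiber : ∀ g ∈ G, #{t ∈ T | ψ g - t ∈ S} = #S := fun g hg =>
    card_nbij' (ψ g - ·) (ψ g - ·) (fun t ht => (mem_filter.1 ht).2)
      (fun y hy => mem_filter.2 ⟨hT g hg y hy, by simpa using hy⟩)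
      (fun t _ => sub_sub_cancel _ _) (fun y _ => sub_sub_cancel _ _)
  have hsum : ∑ t ∈ T, #{g ∈ G | ψ g - t ∈ S} = #G * #S := by
    simp_rw [card_filter]
    rw [sum_comm]
    simp_rw [← card_filter]
    rw [sum_congr rfl hfiber, sum_const, smul_eq_mul]
  refine exists_le_of_sum_le hTne ?_
  rw [sum_const, ← mul_sum, hsum, smul_eq_mul]

section Transfer

variable {D L E e M : ℕ} {K B : ℤ} {Z : ℕ → Fin D → ℤ}

lemma DegreeLEOn.of_digitsEval (hv : DegreeLEOn L e fun x => digitsEval B (Z x))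
    (hZ : ∀ x < L, ∀ d, |Z x d| ≤ K) (hB : 2 ^ (e + 2) * K < B) (d : Fin D) :
    DegreeLEOn L e fun x => Z x d := by
  intro x hx
  -- the differences of the digits are balanced digits themselves, so they cannot carry
  have hsmall : ∀ d, 2 * |Δ^[e + 1] (fun y => Z y d) x| < B := fun d => by
    have := abs_fwdDiff_iter_le (f := fun y => Z y d) (n := e + 1) (x := x)
      fun j _ => hZ (x + j) (by omega) d
    rw [pow_succ] at hB
    linarith
  have := eq_zero_of_digitsEval_eq_zero hsmall (by rw [← fwdDiff_iter_digitsEval]; exact hv x hx)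
  exact congrFun this d

lemma IsPolyPattern.sum_sq_of_digitsEval (hv : IsPolyPattern L e fun x => digitsEval B (Z x))
    (hZ : ∀ x < L, ∀ d, |Z x d| ≤ K) (hB : 2 ^ (e + 2) * K < B) (he : 2 * e < L) :
    IsPolyPattern L (2 * e) fun x => ∑ d, Z x d ^ 2 := by
  obtain ⟨-, hdeg, hpos⟩ := hv
  have hF := hdeg.of_digitsEval hZ hB
  have hsq : (fun x => ∑ d, Z x d ^ 2) = ∑ d, (fun x => Z x d) * fun x => Z x d := by
    ext x; simp [sq]
  rw [hsq, two_mul]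
  refine ⟨by omega, DegreeLEOn.sum fun d _ => (hF d).mul (hF d), ?_⟩
  obtain ⟨d₀, hd₀⟩ : ∃ d, Δ^[e] (fun x => Z x d) 0 ≠ 0 := by
    by_contra! h
    rw [fwdDiff_iter_digitsEval] at hpos
    simp [h, digitsEval] at hpos
  rw [fwdDiff_iter_finsetSum, Finset.sum_apply]
  simp_rw [(hF _).fwdDiff_iter_add_mul (hF _) (by omega)]
  rw [← mul_sum]
  exact mul_pos (by exact_mod_cast Nat.choose_pos (by omega))
    (sum_pos' (fun d _ => mul_self_nonneg _) ⟨d₀, mem_univ _, mul_self_pos.2 hd₀⟩)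

lemma PatternFree.image_digitsEval {S' : Finset ℤ} (hfree : PatternFree S' L (2 * E))
    {G : Finset (Fin D → ℤ)} (hG : ∀ z ∈ G, ∀ d, |z d| ≤ M) (hM : 0 < M) (hE : 2 * E < L)
    (t : ℤ) :
    PatternFree ({z ∈ G | ∑ d, z d ^ 2 - t ∈ S'}.image (digitsEval (2 ^ (L + 2) * M))) L E := by
  rintro e ⟨he, heE⟩ v hv
  by_contra! hvS
  have : ∀ x, ∃ z, x < L →
      z ∈ G ∧ ∑ d, z d ^ 2 - t ∈ S' ∧ digitsEval (2 ^ (L + 2) * M) z = v x := by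
    intro x
    by_cases hx : x < L
    · obtain ⟨z, hz, hzv⟩ := mem_image.1 (hvS x hx)
      exact ⟨z, fun _ => ⟨(mem_filter.1 hz).1, (mem_filter.1 hz).2, hzv⟩⟩
    · exact ⟨0, fun h => absurd h hx⟩
  choose Z hZ using this
  have hB : 2 ^ (e + 2) * (M : ℤ) < 2 ^ (L + 2) * M := by
    gcongr
    · norm_num
    · omega
  have hsq := (hv.congr fun x hx => (hZ x hx).2.2.symm).sum_sq_of_digitsEval
    (fun x hx => hG _ (hZ x hx).1) hB (by omega)
  obtain ⟨x, hx, hxS⟩ := hfree (2 * e) ⟨by omega, by omega⟩ _ (hsq.sub_const (by omega) t)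
  exact hxS (hZ x hx).2.1

theorem exists_patternFree_of_patternFree_two_mul {S' : Finset ℤ}
    (hfree : PatternFree S' L (2 * E))
    (hS' : S' ⊆ Ico 0 (D * M ^ 2 + 1 : ℕ)) (hM : 0 < M) (hE : 2 * E < L) :
    ∃ S ⊆ Ico (0 : ℤ) ((2 ^ (L + 2) * M) ^ D : ℕ), PatternFree S L E ∧
      M ^ D * #S' ≤ (2 * (D * M ^ 2) + 1) * #S := by
  set box := Fintype.piFinset fun _ : Fin D => Ico (0 : ℤ) M
  have hbox : ∀ z ∈ box, ∀ d, 0 ≤ z d ∧ z d < M := by simp [box]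
  have hsq : ∀ z ∈ box, 0 ≤ ∑ d, z d ^ 2 ∧ ∑ d, z d ^ 2 ≤ D * M ^ 2 := fun z hz => by
    refine ⟨by positivity, ?_⟩
    calc ∑ d, z d ^ 2 ≤ ∑ _d : Fin D, (M : ℤ) ^ 2 :=
          sum_le_sum fun d _ => by nlinarith [hbox z hz d]
      _ = D * M ^ 2 := by simp
  obtain ⟨t, -, ht⟩ := exists_card_mul_le_card_filter_sub_mem (G := box) (S := S')
    (T := Icc (-(D * M ^ 2 : ℕ)) (D * M ^ 2 : ℕ)) (fun z => ∑ d, z d ^ 2)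
    (fun z hz y hy => by
      have := hsq z hz; have := mem_Ico.1 (hS' hy)
      rw [mem_Icc]; push_cast at *; omega)
    (nonempty_Icc.2 (by omega))
  have hMB : 2 * (M : ℤ) ≤ 2 ^ (L + 2) * M := by
    gcongr
    calc (2 : ℤ) = 2 ^ 1 := by norm_num
      _ ≤ 2 ^ (L + 2) := pow_le_pow_right₀ (by norm_num) (by omega)
  refine ⟨_, ?_, hfree.image_digitsEval (G := box)
    (fun z hz d => abs_le.2 ⟨by linarith [hbox z hz d], (hbox z hz d).2.le⟩) hM hE t, ?_⟩
  · intro x hx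
    obtain ⟨z, hz, rfl⟩ := mem_image.1 hx
    have hz := hbox z (mem_filter.1 hz).1
    push_cast
    exact digitsEval_mem_Ico fun d => mem_Ico.2 ⟨(hz d).1, by linarith [hz d]⟩
  · rw [card_image_of_injOn ((digitsEval_injOn hMB).mono (filter_subset _ _))]
    have hbox_card : #box = M ^ D := by simp [box]
    have hT_card : #(Icc (-(D * M ^ 2 : ℕ) : ℤ) (D * M ^ 2 : ℕ)) = 2 * (D * M ^ 2) + 1 := by
      simp only [Int.card_Icc]; omega
    rwa [hbox_card, hT_card] at ht

end Transfer

lemma exists_mul_pow_le_lt {C b N : ℕ} (hC : 0 < C) (hb : 0 < b) (hN : C ^ b ≤ N) :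
    ∃ M, 0 < M ∧ (C * M) ^ b ≤ N ∧ N < (C * (M + 1)) ^ b := by
  classical
  have hex : ∃ M, N < (C * (M + 1)) ^ b :=
    ⟨N, calc N < N + 1 := N.lt_succ_self
      _ ≤ C * (N + 1) := Nat.le_mul_of_pos_left _ hC
      _ ≤ (C * (N + 1)) ^ b := Nat.le_self_pow hb.ne' _⟩
  have hpos : 0 < Nat.find hex := Nat.pos_of_ne_zero fun h => by
    have := Nat.find_spec hex
    rw [h, zero_add, mul_one] at this
    omega
  refine ⟨Nat.find hex, hpos, ?_, Nat.find_spec hex⟩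
  have := Nat.find_min hex (Nat.sub_one_lt hpos.ne')
  rwa [not_lt, Nat.sub_add_cancel hpos] at this

lemma mul_sq_add_one_le_two_pow_pow {b k M : ℕ} (hk : k ≠ 0) (hM : M ≤ 2 ^ b ^ k) :
    b * M ^ 2 + 1 ≤ 2 ^ (3 * b) ^ k := by
  set P := b ^ k
  have hM2 : M ^ 2 ≤ 2 ^ (2 * P) := by
    rw [mul_comm, pow_mul]; exact Nat.pow_le_pow_left hM 2
  have hb : b + 1 ≤ 2 ^ P :=
    Nat.lt_two_pow_self.trans_le (Nat.pow_le_pow_right two_pos (Nat.le_self_pow hk b))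
  calc b * M ^ 2 + 1 ≤ (b + 1) * 2 ^ (2 * P) := by nlinarith [Nat.one_le_two_pow (n := 2 * P)]
    _ ≤ 2 ^ P * 2 ^ (2 * P) := by gcongr
    _ = 2 ^ (3 * P) := by rw [← pow_add]; ring_nf
    _ ≤ 2 ^ (3 * b) ^ k := Nat.pow_le_pow_right two_pos
        (by rw [mul_pow]; exact Nat.mul_le_mul_right _ (Nat.le_self_pow hk 3))

def HasDenseFreeSets (L E k c : ℕ) : Prop :=
  ∀ b N : ℕ, 0 < b → 0 < N → N ≤ 2 ^ b ^ k →
    ∃ S ⊆ Ico (0 : ℤ) N, PatternFree S L E ∧ N ≤ #S * 2 ^ (c * b)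

lemma exists_patternFree_le_card_mul_of_le {L E N n : ℕ} (hN : 0 < N) (h : N ≤ 2 ^ n) :
    ∃ S ⊆ Ico (0 : ℤ) N, PatternFree S L E ∧ N ≤ #S * 2 ^ n :=
  ⟨{0}, by simpa using hN, patternFree_singleton 0 L E, by simpa using h⟩

lemma HasDenseFreeSets.succ {L E k c : ℕ} (h : HasDenseFreeSets L (2 * E) k c) (hk : k ≠ 0)
    (hE : 2 * E < L) : HasDenseFreeSets L E (k + 1) (3 * c + L + 4) := by
  intro b N hb hN hNb
  by_cases hsmall : N ≤ 2 ^ ((L + 2) * b)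
  · exact exists_patternFree_le_card_mul_of_le hN
      (hsmall.trans (Nat.pow_le_pow_right two_pos (by nlinarith)))
  set C := 2 ^ (L + 2) with hC
  obtain ⟨M, hM, hMN, hNM⟩ := exists_mul_pow_le_lt (C := C) (N := N) (by positivity) hb
    (by rw [← pow_mul]; omega)
  have hCM : C * M ≤ 2 ^ b ^ k := by
    refine (Nat.pow_le_pow_iff_left hb.ne').1 (hMN.trans (hNb.trans_eq ?_))
    rw [← pow_mul, ← pow_succ]
  obtain ⟨S', hS', hS'free, hS'card⟩ := h (3 * b) (b * M ^ 2 + 1) (by omega) (by omega)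
    (mul_sq_add_one_le_two_pow_pow hk ((Nat.le_mul_of_pos_left M (by positivity)).trans hCM))
  obtain ⟨S, hS, hSfree, hScard⟩ := exists_patternFree_of_patternFree_two_mul hS'free hS' hM hE
  refine ⟨S, hS.trans (Ico_subset_Ico_right (by exact_mod_cast hMN)), hSfree, ?_⟩
  set X := 2 ^ (c * (3 * b))
  have hMS : M ^ b ≤ 2 * #S * X := by
    refine Nat.le_of_mul_le_mul_right (c := b * M ^ 2 + 1) ?_ (by omega)
    calc M ^ b * (b * M ^ 2 + 1) ≤ M ^ b * #S' * X := by rw [mul_assoc]; gcongr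
      _ ≤ (2 * (b * M ^ 2) + 1) * #S * X := by gcongr
      _ ≤ 2 * #S * X * (b * M ^ 2 + 1) := by nlinarith
  calc N ≤ (2 * (C * M)) ^ b := hNM.le.trans (Nat.pow_le_pow_left (by nlinarith) _)
    _ = 2 ^ b * C ^ b * M ^ b := by rw [mul_pow, mul_pow, ← mul_assoc]
    _ ≤ 2 ^ b * C ^ b * (2 * #S * X) := by gcongr
    _ = #S * 2 ^ (b + (L + 2) * b + 1 + c * (3 * b)) := by
      rw [hC, ← pow_mul, pow_add, pow_add, pow_add, pow_one]
      generalize 2 ^ ((L + 2) * b) = Y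
      ring
    _ ≤ #S * 2 ^ ((3 * c + L + 4) * b) := by
      gcongr
      · norm_num
      · nlinarith

theorem exists_hasDenseFreeSets (L r : ℕ) :
    ∃ c, ∀ E, 2 ^ r * E < L → HasDenseFreeSets L E (r + 1) c := by
  induction r with
  | zero =>
    exact ⟨1, fun E _ b N _ hN hNb => exists_patternFree_le_card_mul_of_le hN (by simpa using hNb)⟩
  | succ r ih =>
    obtain ⟨c, hc⟩ := ih
    exact ⟨3 * c + L + 4, fun E hE => (hc (2 * E) (by rw [pow_succ] at hE; linarith)).succ
      (by omega) (by have := Nat.one_le_two_pow (n := r); nlinarith [pow_succ 2 r])⟩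

lemma one_le_logb_rpow {x β : ℝ} (hx : 2 ≤ x) (hβ : 0 ≤ β) : 1 ≤ Real.logb 2 x ^ β := by
  refine Real.one_le_rpow ?_ hβ
  rwa [Real.le_logb_iff_rpow_le one_lt_two (by linarith), Real.rpow_one]

theorem exists_patternFree_le_card_mul_rpow (L m : ℕ) (hm : m ≠ 0) (hL : 2 ^ (m - 1) < L) :
    ∃ c : ℕ, ∀ N : ℕ, 2 ≤ N → ∃ S ⊆ Ico (0 : ℤ) N, PatternFree S L 1 ∧
      (N : ℝ) ≤ #S * 2 ^ (c * Real.logb 2 N ^ ((1 : ℝ) / m)) := by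
  obtain ⟨c, hc⟩ := exists_hasDenseFreeSets L (m - 1)
  refine ⟨2 * c, fun N hN => ?_⟩
  set q := Real.logb 2 N ^ ((1 : ℝ) / m)
  have hq : 1 ≤ q := one_le_logb_rpow (by exact_mod_cast hN) (by positivity)
  have hNb : N ≤ 2 ^ ⌈q⌉₊ ^ m := by
    have : Real.logb 2 N ≤ (⌈q⌉₊ ^ m : ℕ) := by
      calc Real.logb 2 N = q ^ m := by
            simp only [q, one_div]
            exact (Real.rpow_inv_natCast_pow (Real.logb_nonneg one_lt_two (by norm_cast; omega))
              hm).symm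
        _ ≤ (⌈q⌉₊ : ℝ) ^ m := by gcongr; exact Nat.le_ceil q
        _ = (⌈q⌉₊ ^ m : ℕ) := by push_cast; rfl
    rw [Real.logb_le_iff_le_rpow one_lt_two (by positivity), Real.rpow_natCast] at this
    exact_mod_cast this
  obtain ⟨S, hS, hfree, hcard⟩ := hc 1 (by rwa [mul_one]) ⌈q⌉₊ N (Nat.ceil_pos.2 (by linarith))
    (by omega) (by rwa [Nat.sub_add_cancel (Nat.one_le_iff_ne_zero.2 hm)])
  refine ⟨S, hS, hfree, ?_⟩
  calc (N : ℝ) ≤ #S * 2 ^ (c * ⌈q⌉₊ : ℕ) := by exact_mod_cast hcard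
    _ = #S * (2 : ℝ) ^ ((c : ℝ) * ⌈q⌉₊) := by rw [← Real.rpow_natCast]; push_cast; rfl
    _ ≤ #S * 2 ^ (((2 * c : ℕ) : ℝ) * q) := by
        refine mul_le_mul_of_nonneg_left (Real.rpow_le_rpow_of_exponent_le one_le_two ?_)
          (by positivity)
        push_cast
        nlinarith [Nat.ceil_lt_add_one (by linarith : 0 ≤ q), (Nat.cast_nonneg c : (0 : ℝ) ≤ c)]

def weightedSum {k : ℕ} (x : Fin k → ℕ) : ℤ := ∑ i : Fin k, ((i : ℕ) + 1 : ℤ) * x i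

lemma weightedSum_update {k : ℕ} (a : Fin k → ℕ) (i : Fin k) (d : ℕ) :
    weightedSum (Function.update a i (a i + d)) = weightedSum a + ((i : ℕ) + 1 : ℤ) * d := by
  have h : ∀ j : Fin k, ((j : ℕ) + 1 : ℤ) * (Function.update a i (a i + d) j : ℕ) =
      ((j : ℕ) + 1 : ℤ) * a j + if j = i then ((i : ℕ) + 1 : ℤ) * d else 0 := by
    intro j
    by_cases hj : j = i
    · subst hj; simp; ring
    · simp [hj]
  simp only [weightedSum, h, sum_add_distrib, sum_ite_eq', mem_univ, if_true]

lemma weightedSum_mem_Icc {k n : ℕ} {x : Fin k → ℕ} (hx : x ∈ gridNk k n) :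
    0 ≤ weightedSum x ∧ weightedSum x ≤ k ^ 2 * n := by
  simp only [gridNk, Fintype.mem_piFinset, mem_Icc] at hx
  refine ⟨by unfold weightedSum; positivity, ?_⟩
  calc weightedSum x ≤ ∑ _i : Fin k, (k : ℤ) * n :=
        sum_le_sum fun i _ => mul_le_mul (by have := i.2; omega) (by exact_mod_cast (hx i).2)
          (by positivity) (by positivity)
    _ = k ^ 2 * n := by simp; ring

theorem exists_gridCornerFree_of_patternFree {k n : ℕ} (hk : 0 < k) {S : Finset ℤ}
    (hS : S ⊆ Ico 0 (k ^ 2 * n : ℕ)) (hfree : PatternFree S (k + 1) 1) :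
    ∃ A ⊆ gridNk k n, GridCornerFree k n A ∧ n ^ k * #S ≤ (2 * (k ^ 2 * n) + 1) * #A := by
  obtain ⟨t, -, ht⟩ := exists_card_mul_le_card_filter_sub_mem (G := gridNk k n) (S := S)
    (T := Icc (-(k ^ 2 * n : ℕ)) (k ^ 2 * n : ℕ)) weightedSum
    (fun x hx y hy => by
      have := weightedSum_mem_Icc hx; have := mem_Ico.1 (hS hy)
      rw [mem_Icc]; push_cast at *; omega)
    (nonempty_Icc.2 (by omega))
  refine ⟨{x ∈ gridNk k n | weightedSum x - t ∈ S}, filter_subset _ _, ?_, ?_⟩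
  · rintro C ⟨a, d, hd, rfl, -⟩ hCA
    obtain ⟨j, hj, hjS⟩ := hfree 1 ⟨le_rfl, le_rfl⟩ _
      (isPolyPattern_one (a := weightedSum a - t) (d := d) (by exact_mod_cast hd) (by omega))
    apply hjS
    rcases j with _ | j
    · simpa using (mem_filter.1 (hCA (mem_insert_self a _))).2
    · have := (mem_filter.1 (hCA (mem_insert_of_mem
        (mem_image_of_mem _ (mem_univ ⟨j, by omega⟩))))).2
      rw [weightedSum_update] at this
      convert this using 1
      push_cast
      ring
  · have hgrid : #(gridNk k n) = n ^ k := by simp [gridNk]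
    have hT : #(Icc (-(k ^ 2 * n : ℕ) : ℤ) (k ^ 2 * n : ℕ)) = 2 * (k ^ 2 * n) + 1 := by
      simp only [Int.card_Icc]; omega
    rwa [hgrid, hT] at ht

lemma card_le_cornerFreeNumber {k n : ℕ} {A : Finset (Fin k → ℕ)} (hA : A ⊆ gridNk k n)
    (hfree : GridCornerFree k n A) : #A ≤ cornerFreeNumber k n :=
  le_csSup ⟨n ^ k, by rintro m ⟨B, hB, -, rfl⟩; simpa [gridNk] using card_le_card hB⟩
    ⟨A, hA, hfree, rfl⟩

theorem two_rpow_div_three_le_cornerFreeNumber_div {k : ℕ} (hk : 2 ≤ k) :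
    ∃ c : ℕ, ∀ n : ℕ, 0 < n →
      (2 : ℝ) ^ (-(c * Real.logb 2 (k ^ 2 * n : ℕ) ^ ((1 : ℝ) / Nat.clog 2 k))) / 3 ≤
        cornerFreeNumber k n / (n : ℝ) ^ k := by
  have hm := (Nat.clog_pos one_lt_two hk).ne'
  obtain ⟨c, hc⟩ := exists_patternFree_le_card_mul_rpow (k + 1) _ hm
    (by have := Nat.pow_pred_clog_lt_self one_lt_two hk; rw [Nat.pred_eq_sub_one] at this; omega)
  refine ⟨c, fun n hn => ?_⟩
  obtain ⟨S, hS, hSfree, hScard⟩ := hc (k ^ 2 * n) (by nlinarith)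
  obtain ⟨A, hA, hAfree, hAcard⟩ := exists_gridCornerFree_of_patternFree (by omega) hS hSfree
  set N := k ^ 2 * n
  have hN : 0 < N := by positivity
  have hcard : (n : ℝ) ^ k * #S ≤ 3 * N * cornerFreeNumber k n := by
    have := hAcard.trans (Nat.mul_le_mul_left _ (card_le_cornerFreeNumber hA hAfree))
    have : n ^ k * #S ≤ 3 * N * cornerFreeNumber k n :=
      this.trans (Nat.mul_le_mul_right _ (by omega))
    exact_mod_cast this
  rw [le_div_iff₀ (by positivity), Real.rpow_neg zero_le_two]
  calc (2 ^ (c * Real.logb 2 N ^ ((1 : ℝ) / Nat.clog 2 k)))⁻¹ / 3 * (n : ℝ) ^ k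
      ≤ #S / N / 3 * (n : ℝ) ^ k := by
        gcongr
        rw [inv_le_iff_one_le_mul₀' (by positivity), mul_div_assoc', le_div_iff₀ (by positivity),
          one_mul, mul_comm]
        exact hScard
    _ = (n : ℝ) ^ k * #S / (3 * N) := by ring
    _ ≤ cornerFreeNumber k n := by rw [div_le_iff₀ (by positivity)]; linarith

lemma logb_mul_rpow_le {x y β : ℝ} (hx : 1 ≤ x) (hxy : x ≤ y) (hβ₀ : 0 ≤ β) (hβ₁ : β ≤ 1) :
    Real.logb 2 (x * y) ^ β ≤ 2 * Real.logb 2 y ^ β := by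
  have hx₀ : 0 < x := zero_lt_one.trans_le hx
  have hlog : 0 ≤ Real.logb 2 x := Real.logb_nonneg one_lt_two hx
  have hxy' : Real.logb 2 x ≤ Real.logb 2 y :=
    Real.logb_le_logb_of_le one_lt_two hx₀ hxy
  calc Real.logb 2 (x * y) ^ β ≤ (2 * Real.logb 2 y) ^ β := by
        rw [Real.logb_mul hx₀.ne' (hx₀.trans_le hxy).ne']
        exact Real.rpow_le_rpow (by linarith) (by linarith) hβ₀
    _ = 2 ^ β * Real.logb 2 y ^ β := Real.mul_rpow zero_le_two (by linarith)
    _ ≤ 2 * Real.logb 2 y ^ β :=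
        mul_le_mul_of_nonneg_right
          ((Real.rpow_le_rpow_of_exponent_le one_le_two hβ₁).trans_eq (Real.rpow_one 2))
          (Real.rpow_nonneg (hlog.trans hxy') _)

lemma two_rpow_neg_add_three_mul_lt (c : ℝ) {q : ℝ} (hq : 1 ≤ q) :
    (2 : ℝ) ^ (-((c + 3) * q)) < 2 ^ (-(c * q)) / 3 := by
  calc (2 : ℝ) ^ (-((c + 3) * q)) = 2 ^ (-(c * q)) * 2 ^ (-(3 * q)) := by
        rw [← Real.rpow_add two_pos]; ring_nf
    _ ≤ 2 ^ (-(c * q)) * 2 ^ (-3 : ℝ) := by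
        gcongr
        · norm_num
        · linarith
    _ < 2 ^ (-(c * q)) / 3 := by
        rw [div_eq_mul_inv]
        gcongr
        norm_num

lemma ceil_logb_two_natCast (k : ℕ) : (⌈Real.logb 2 (k : ℝ)⌉ : ℝ) = Nat.clog 2 k := by
  have := Real.ceil_logb_natCast (b := 2) (r := k) (by positivity)
  rw [Nat.cast_ofNat, Int.clog_natCast] at this
  exact_mod_cast this

end Rankin

open Rankin in
/-- Behrend–Rankin lower bound: for every `k ≥ 2` there is `α_k > 0` such that for all
sufficiently large `n`, `c_k(n)/n^k > 2^(−α_k·(log n)^(β_k))` where `β_k = 1/⌈log₂ k⌉`.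
Logarithms are base 2. -/
theorem cornerFreeNumber_lower_bound (k : ℕ) (hk : 2 ≤ k) :
    ∃ α : ℝ, 0 < α ∧ ∃ n₀ : ℕ, ∀ n : ℕ, n₀ ≤ n →
      (2 : ℝ) ^ (-(α * (Real.logb 2 (n : ℝ)) ^ ((1 : ℝ) / (⌈Real.logb 2 (k : ℝ)⌉ : ℝ)))) <
        (cornerFreeNumber k n : ℝ) / (n : ℝ) ^ k := by
  obtain ⟨c, hc⟩ := two_rpow_div_three_le_cornerFreeNumber_div hk
  refine ⟨2 * c + 3, by positivity, k ^ 2, fun n hn => ?_⟩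
  rw [ceil_logb_two_natCast]
  set β : ℝ := 1 / Nat.clog 2 k
  have hβ₀ : 0 ≤ β := by positivity
  have hβ₁ : β ≤ 1 :=
    div_le_one_of_le₀ (by exact_mod_cast Nat.clog_pos one_lt_two hk) (by positivity)
  have hkn : (k : ℝ) ^ 2 ≤ n := by exact_mod_cast hn
  have hk2 : (2 : ℝ) ≤ k := by exact_mod_cast hk
  have hlog := logb_mul_rpow_le (by nlinarith) hkn hβ₀ hβ₁
  refine (two_rpow_neg_add_three_mul_lt _ (one_le_logb_rpow (by nlinarith) hβ₀)).trans_le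
    ((div_le_div_of_nonneg_right (Real.rpow_le_rpow_of_exponent_le one_le_two ?_)
      (by norm_num)).trans (hc n (by nlinarith)))
  push_cast
  nlinarith [(Nat.cast_nonneg c : (0 : ℝ) ≤ c)]
end
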